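/- For every j ∈ [d], the map x ↦ σ_{*,*}(x) is partially differentiable in x_j with ∂σ_{*,*}(x)/∂x_j = 2 σ_{*,*}(x) diag(A_{x,*,j}) σ_{*,*}(x) − diag(A_{x,*,j}) σ_{*,*}(x) − σ_{*,*}(x) diag(A_{x,*,j}). -/

import Mathlib

open Matrix

/-- `s_x := A x - b`. -/
noncomputable def sVec {n d : ℕ} (A : Matrix (Fin n) (Fin d) ℝ) (b : Fin n → ℝ)
    (x : Fin d → ℝ) : Fin n → ℝ := A.mulVec x - b

/-- `A_x := S_x⁻¹ A` where `S_x := diag(s_x)`. -/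
noncomputable def matAx {n d : ℕ} (A : Matrix (Fin n) (Fin d) ℝ) (b : Fin n → ℝ)
    (x : Fin d → ℝ) : Matrix (Fin n) (Fin d) ℝ := (Matrix.diagonal (sVec A b x))⁻¹ * A

/-- The leverage-score matrix `σ_{*,*}(x) := A_x (A_xᵀ A_x)⁻¹ A_xᵀ`. -/
noncomputable def sigM {n d : ℕ} (A : Matrix (Fin n) (Fin d) ℝ) (b : Fin n → ℝ)
    (x : Fin d → ℝ) : Matrix (Fin n) (Fin n) ℝ :=
  matAx A b x * ((matAx A b x)ᵀ * matAx A b x)⁻¹ * (matAx A b x)ᵀ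

section helpers
variable {n d : ℕ} (A : Matrix (Fin n) (Fin d) ℝ) (b : Fin n → ℝ) (x : Fin d → ℝ)

lemma diag_inv' {n : ℕ} (s : Fin n → ℝ) (hs : ∀ i, s i ≠ 0) :
    (Matrix.diagonal s)⁻¹ = Matrix.diagonal (fun i => (s i)⁻¹) := by
  apply Matrix.inv_eq_right_inv
  rw [Matrix.diagonal_mul_diagonal]
  have h : (fun i => s i * (s i)⁻¹) = fun _ => (1:ℝ) :=
    funext fun i => mul_inv_cancel₀ (hs i)
  rw [h, Matrix.diagonal_one]

lemma matAx_apply' (hy : ∀ i, sVec A b x i ≠ 0) (i : Fin n) (k : Fin d) :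
    matAx A b x i k = (sVec A b x i)⁻¹ * A i k := by
  rw [matAx, diag_inv' _ hy, Matrix.diagonal_mul]

lemma diffAt_det' {m : ℕ} (F : ℝ → Matrix (Fin m) (Fin m) ℝ) (t0 : ℝ)
    (hF : ∀ p q, DifferentiableAt ℝ (fun t => F t p q) t0) :
    DifferentiableAt ℝ (fun t => (F t).det) t0 := by
  have h : (fun t => (F t).det)
      = fun t => ∑ σ : Equiv.Perm (Fin m),
          ((Equiv.Perm.sign σ : ℤ) : ℝ) * ∏ i, F t (σ i) i := by
    funext t; rw [Matrix.det_apply']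
  rw [h]
  apply DifferentiableAt.fun_sum
  intro σ _
  exact (DifferentiableAt.fun_finsetProd (fun i _ => hF (σ i) i)).const_mul _

lemma diffAt_adj' {m : ℕ} (F : ℝ → Matrix (Fin m) (Fin m) ℝ) (t0 : ℝ)
    (hF : ∀ p q, DifferentiableAt ℝ (fun t => F t p q) t0) (p q : Fin m) :
    DifferentiableAt ℝ (fun t => (F t).adjugate p q) t0 := by
  simp only [Matrix.adjugate_apply]
  apply diffAt_det'
  intro a c
  simp only [Matrix.updateRow_apply]
  rcases eq_or_ne a q with rfl | h
  · simp
  · simpa [h] using hF a c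

lemma diffAt_inv' {m : ℕ} (F : ℝ → Matrix (Fin m) (Fin m) ℝ) (t0 : ℝ)
    (hF : ∀ p q, DifferentiableAt ℝ (fun t => F t p q) t0)
    (hdet : (F t0).det ≠ 0) (p q : Fin m) :
    DifferentiableAt ℝ (fun t => (F t)⁻¹ p q) t0 := by
  have h : (fun t => (F t)⁻¹ p q)
      = fun t => ((F t).det)⁻¹ * (F t).adjugate p q := by
    funext t
    rw [Matrix.inv_def, Ring.inverse_eq_inv]
    simp [Matrix.smul_apply]
  rw [h]
  exact ((diffAt_det' F t0 hF).inv hdet).mul (diffAt_adj' F t0 hF p q)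

end helpers

/-- For every `j ∈ [d]`, the leverage-score matrix `x ↦ σ_{*,*}(x)` is partially
differentiable in `x_j` with
`∂σ_{*,*}/∂x_j = 2 σ diag(A_{x,*,j}) σ − diag(A_{x,*,j}) σ − σ diag(A_{x,*,j})`
(stated entrywise). -/
theorem stmt6 {n d : ℕ} (hn : 0 < n) (hd : 0 < d)
    (A : Matrix (Fin n) (Fin d) ℝ) (b : Fin n → ℝ) (x : Fin d → ℝ)
    (hs : ∀ i, sVec A b x i ≠ 0)
    (hrank : IsUnit ((matAx A b x)ᵀ * matAx A b x).det) (j : Fin d) :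
    ∀ k l, HasDerivAt (fun t : ℝ => sigM A b (Function.update x j t) k l)
      (((2 : ℝ) • (sigM A b x * Matrix.diagonal (fun i => matAx A b x i j) * sigM A b x)
        - Matrix.diagonal (fun i => matAx A b x i j) * sigM A b x
        - sigM A b x * Matrix.diagonal (fun i => matAx A b x i j)) k l)
      (x j) := by
  intro k l
  set u : ℝ → (Fin d → ℝ) := fun t => Function.update x j t with hu
  have hux : u (x j) = x := Function.update_eq_self j x
  set Ax : Matrix (Fin n) (Fin d) ℝ := matAx A b x with hAx
  set D : Matrix (Fin n) (Fin n) ℝ := Matrix.diagonal (fun i => Ax i j) with hD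
  set G : Matrix (Fin d) (Fin d) ℝ := Axᵀ * Ax with hG
  set H : Matrix (Fin d) (Fin d) ℝ := G⁻¹ with hH
  set Mx' : Matrix (Fin n) (Fin d) ℝ := -(D * Ax) with hMx'
  -- derivative of s
  have h_s : ∀ i : Fin n, HasDerivAt (fun t => sVec A b (u t) i) (A i j) (x j) := by
    intro i
    have hfun : (fun t => sVec A b (u t) i)
        = fun t => (∑ p : Fin d, A i p * Function.update x j t p) - b i := by
      funext t
      simp [sVec, Matrix.mulVec, dotProduct, hu]
    rw [hfun]
    have hterm : ∀ p : Fin d,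
        HasDerivAt (fun t => A i p * Function.update x j t p)
          (if p = j then A i j else 0) (x j) := by
      intro p
      rcases eq_or_ne p j with h | h
      · subst h
        simp only [Function.update_self, if_pos rfl]
        simpa using (hasDerivAt_id (x p)).const_mul (A i p)
      · simp only [Function.update_of_ne h, if_neg h]
        exact hasDerivAt_const _ _
    have := (HasDerivAt.fun_sum (fun p (_ : p ∈ Finset.univ) => hterm p)).sub_const (b i)
    simpa using this
  -- eventually all entries of s nonzero
  have h_ev : ∀ᶠ t in nhds (x j), ∀ i, sVec A b (u t) i ≠ 0 := by
    rw [Filter.eventually_all]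
    intro i
    apply (h_s i).continuousAt.eventually_ne
    rw [hux]; exact hs i
  -- derivative of matAx entries
  have hM' : ∀ (i : Fin n) (p : Fin d),
      HasDerivAt (fun t => matAx A b (u t) i p) (Mx' i p) (x j) := by
    intro i p
    have h1 : HasDerivAt (fun t => (sVec A b (u t) i)⁻¹ * A i p)
        ((-(A i j) / (sVec A b (u (x j)) i) ^ 2) * A i p) (x j) := by
      exact ((h_s i).inv (by rw [hux]; exact hs i)).mul_const _
    have h2 : (fun t => matAx A b (u t) i p)
        =ᶠ[nhds (x j)] fun t => (sVec A b (u t) i)⁻¹ * A i p := by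
      filter_upwards [h_ev] with t ht
      exact matAx_apply' A b (u t) ht i p
    have h3 := h1.congr_of_eventuallyEq h2
    refine h3.congr_deriv (Eq.symm ?_)
    have e1 : Ax i j = (sVec A b x i)⁻¹ * A i j := matAx_apply' A b x hs i j
    have e2 : Ax i p = (sVec A b x i)⁻¹ * A i p := matAx_apply' A b x hs i p
    rw [hux] at h3 ⊢
    simp only [hMx', Matrix.neg_apply, Matrix.diagonal_mul, hD]
    rw [e1, e2]
    field_simp
  -- derivative of G entries
  set Gd : Matrix (Fin d) (Fin d) ℝ := Mx'ᵀ * Ax + Axᵀ * Mx' with hGd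
  have hGder : ∀ p q, HasDerivAt
      (fun t => ((matAx A b (u t))ᵀ * matAx A b (u t)) p q) (Gd p q) (x j) := by
    intro p q
    have hfun : (fun t => ((matAx A b (u t))ᵀ * matAx A b (u t)) p q)
        = fun t => ∑ i : Fin n, matAx A b (u t) i p * matAx A b (u t) i q := by
      funext t; simp [Matrix.mul_apply, Matrix.transpose_apply]
    rw [hfun]
    have hh := HasDerivAt.fun_sum (fun i (_ : i ∈ Finset.univ) => (hM' i p).fun_mul (hM' i q))
    refine hh.congr_deriv (Eq.symm ?_)
    rw [hux]
    simp [hGd, Matrix.add_apply, Matrix.mul_apply, Matrix.transpose_apply,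
      Finset.sum_add_distrib]
    rfl
  have hGdiff : ∀ p q, DifferentiableAt ℝ
      (fun t => ((matAx A b (u t))ᵀ * matAx A b (u t)) p q) (x j) :=
    fun p q => (hGder p q).differentiableAt
  have hdet0 : ((matAx A b (u (x j)))ᵀ * matAx A b (u (x j))).det ≠ 0 := by
    rw [hux]; exact hrank.ne_zero
  have hHdiff : ∀ p q, DifferentiableAt ℝ
      (fun t => (((matAx A b (u t))ᵀ * matAx A b (u t))⁻¹) p q) (x j) :=
    fun p q => diffAt_inv' _ _ hGdiff hdet0 p q
  set Hd : Matrix (Fin d) (Fin d) ℝ := Matrix.of (fun p q =>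
    deriv (fun t => (((matAx A b (u t))ᵀ * matAx A b (u t))⁻¹) p q) (x j)) with hHdm
  have hHder : ∀ p q, HasDerivAt
      (fun t => (((matAx A b (u t))ᵀ * matAx A b (u t))⁻¹) p q) (Hd p q) (x j) :=
    fun p q => (hHdiff p q).hasDerivAt
  -- eventually invertible
  have h_evdet : ∀ᶠ t in nhds (x j), ((matAx A b (u t))ᵀ * matAx A b (u t)).det ≠ 0 := by
    exact ((diffAt_det' _ _ hGdiff).continuousAt).eventually_ne hdet0
  -- pin down Hd
  have hpin : Gd * H + G * Hd = 0 := by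
    ext p r
    have h1 := HasDerivAt.fun_sum (fun q (_ : q ∈ Finset.univ) => (hGder p q).fun_mul (hHder q r))
    have h2 : (fun t => ∑ q : Fin d, ((matAx A b (u t))ᵀ * matAx A b (u t)) p q *
          (((matAx A b (u t))ᵀ * matAx A b (u t))⁻¹) q r)
        =ᶠ[nhds (x j)] fun _ => (1 : Matrix (Fin d) (Fin d) ℝ) p r := by
      filter_upwards [h_evdet] with t ht
      have hinv := Matrix.mul_nonsing_inv ((matAx A b (u t))ᵀ * matAx A b (u t))
        (isUnit_iff_ne_zero.mpr ht)
      calc (∑ q : Fin d, ((matAx A b (u t))ᵀ * matAx A b (u t)) p q *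
              (((matAx A b (u t))ᵀ * matAx A b (u t))⁻¹) q r)
          = (((matAx A b (u t))ᵀ * matAx A b (u t)) *
              ((matAx A b (u t))ᵀ * matAx A b (u t))⁻¹) p r := (Matrix.mul_apply).symm
        _ = (1 : Matrix (Fin d) (Fin d) ℝ) p r := by rw [hinv]
    have h3 : HasDerivAt (fun t => ∑ q : Fin d, ((matAx A b (u t))ᵀ * matAx A b (u t)) p q *
          (((matAx A b (u t))ᵀ * matAx A b (u t))⁻¹) q r) 0 (x j) :=
      (hasDerivAt_const (x j) _).congr_of_eventuallyEq h2
    have h4 := h1.unique h3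
    rw [hux] at h4
    simp only [Matrix.add_apply, Matrix.mul_apply, Matrix.zero_apply,
      ← Finset.sum_add_distrib]
    exact h4
  have h6 : H * G = 1 := by rw [hH]; exact Matrix.nonsing_inv_mul _ hrank
  have h5 : G * Hd = -(Gd * H) := by
    have h5' := hpin
    rw [add_comm] at h5'
    exact eq_neg_of_add_eq_zero_left h5'
  have hHdEq : Hd = -(H * Gd * H) := by
    calc Hd = (H * G) * Hd := by rw [h6, Matrix.one_mul]
      _ = H * (G * Hd) := by rw [Matrix.mul_assoc]
      _ = H * (-(Gd * H)) := by rw [h5]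
      _ = -(H * Gd * H) := by rw [Matrix.mul_neg, Matrix.mul_assoc]
  -- the sigma entry function
  have hfun2 : (fun t => sigM A b (u t) k l)
      = fun t => ∑ m : Fin d, (∑ p : Fin d, matAx A b (u t) k p *
          (((matAx A b (u t))ᵀ * matAx A b (u t))⁻¹) p m) * matAx A b (u t) l m := by
    funext t
    simp [sigM, Matrix.mul_apply, Matrix.transpose_apply]
  rw [hfun2]
  have key := HasDerivAt.fun_sum (fun m (_ : m ∈ Finset.univ) =>
    ((HasDerivAt.fun_sum (fun p (_ : p ∈ Finset.univ) =>
      (hM' k p).fun_mul (hHder p m))).fun_mul (hM' l m)))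
  refine key.congr_deriv (Eq.symm ?_)
  rw [hux]
  rw [show ((matAx A b x)ᵀ * matAx A b x)⁻¹ = H from rfl]
  have hsig : sigM A b x = Ax * H * Axᵀ := rfl
  have matid : (2 : ℝ) • (sigM A b x * D * sigM A b x)
      - D * sigM A b x - sigM A b x * D
      = Mx' * H * Axᵀ + Ax * Hd * Axᵀ + Ax * H * Mx'ᵀ := by
    rw [hHdEq, hGd, hMx', hsig, hD]
    simp only [Matrix.transpose_neg, Matrix.transpose_mul, Matrix.diagonal_transpose,
      Matrix.neg_mul, Matrix.mul_neg, neg_neg, Matrix.mul_add, Matrix.add_mul,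
      Matrix.mul_assoc, two_smul, neg_add]
    abel
  rw [matid]
  simp [Matrix.mul_apply, Matrix.add_apply, Matrix.transpose_apply,
    Finset.sum_add_distrib, add_mul, Finset.sum_mul, Finset.mul_sum]
  rfl
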